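/- Let J : ℝ² → ℝ be continuous and let x : [0, ∞) → ℝ², u : [0, ∞) → ℝ be such that t ↦ J(x(t)) is absolutely continuous on every compact interval with (d/dt) J(x(t)) ≥ -c(x(t), u(t)) for almost every t, where c ≥ 0 is continuous. If x(t) → x* as t → ∞, J(x*) = 0, and ∫₀^∞ c(x(t), u(t)) dt < ∞, then J(x(0)) ≤ ∫₀^∞ c(x(t), u(t)) dt. -/
import Mathlib


open MeasureTheory intervalIntegral Filter in
theorem stmt_9 (J : ℝ × ℝ → ℝ) (c : ℝ × ℝ → ℝ → ℝ) (x : ℝ → ℝ × ℝ) (u : ℝ → ℝ)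
    (xstar : ℝ × ℝ) (φ : ℝ → ℝ)
    (hJ : Continuous J) (hc : Continuous (fun p : (ℝ × ℝ) × ℝ => c p.1 p.2))
    (hcpos : ∀ y v, 0 ≤ c y v)
    (hAC : ∀ T : ℝ, 0 ≤ T → IntervalIntegrable φ volume 0 T ∧
      J (x T) - J (x 0) = ∫ t in (0:ℝ)..T, φ t)
    (hineq : ∀ᵐ t : ℝ, 0 ≤ t → -(c (x t) (u t)) ≤ φ t)
    (hconv : Tendsto x atTop (nhds xstar))
    (hJstar : J xstar = 0)
    (hfin : IntegrableOn (fun t => c (x t) (u t)) (Set.Ioi 0)) :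
    J (x 0) ≤ ∫ t in Set.Ioi (0:ℝ), c (x t) (u t) := by
  set g : ℝ → ℝ := fun t => c (x t) (u t) with hg
  set I : ℝ := ∫ t in Set.Ioi (0:ℝ), g t with hI
  have key : ∀ T : ℝ, 0 ≤ T → J (x 0) ≤ J (x T) + I := by
    intro T hT
    obtain ⟨hφint, hEq⟩ := hAC T hT
    have hgint : IntervalIntegrable g volume 0 T := by
      rw [intervalIntegrable_iff_integrableOn_Ioc_of_le hT]
      exact hfin.mono_set Set.Ioc_subset_Ioi_self
    have h1 : (∫ t in (0:ℝ)..T, -(g t)) ≤ ∫ t in (0:ℝ)..T, φ t := by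
      apply integral_mono_ae_restrict hT hgint.neg hφint
       
      filter_upwards [ae_restrict_mem measurableSet_Icc, ae_restrict_of_ae hineq]
        with t ht h; simp only [Pi.neg_apply]
      exact h ht.1
    have h2 : (∫ t in (0:ℝ)..T, g t) ≤ I := by
      rw [intervalIntegral.integral_of_le hT]
      apply setIntegral_mono_set hfin
      · filter_upwards with t using hcpos _ _
      · exact Filter.Eventually.of_forall Set.Ioc_subset_Ioi_self
    have h3 : (∫ t in (0:ℝ)..T, -(g t)) = -(∫ t in (0:ℝ)..T, g t) :=
      intervalIntegral.integral_neg
    nlinarith [h1, h2, hEq]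
  have htend : Tendsto (fun T => J (x T) + I) atTop (nhds I) := by
    have : Tendsto (fun T => J (x T)) atTop (nhds 0) := by
      rw [← hJstar]
      exact (hJ.continuousAt.tendsto).comp hconv
    simpa using this.add tendsto_const_nhds
  exact ge_of_tendsto htend (Filter.eventually_atTop.2 ⟨0, key⟩)
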